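/- There is no commutative semigroup S with zero whose zero-divisor graph is the graph G with vertex set {a, b, c₁, x₁, x₂, y₁} and edges: a–b, a–x₁, a–x₂, b–x₁, b–x₂, x₁–x₂, a–c₁, b–c₁ (so N(c₁) = {a,b}), x₁–y₁, x₂–y₁ (so N(y₁) = {x₁,x₂}). That is, the graph of Fig.5 with m = n = 1, V = ∅, plus an edge joining x₁ and x₂, is not a semigroup graph. -/

import Mathlib

/-- A commutative semigroup with zero element. -/
structure CommSemigroupWithZero : Type 1 where
  carrier : Type
  [toCommSemigroup : CommSemigroup carrier]
  [toZero : Zero carrier]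
  zero_mul' : ∀ x : carrier, 0 * x = 0

attribute [instance] CommSemigroupWithZero.toCommSemigroup CommSemigroupWithZero.toZero

/-- A zero-divisor: a nonzero element annihilated by some nonzero element. -/
def IsZeroDivisorElem {S : Type*} [Mul S] [Zero S] (x : S) : Prop :=
  x ≠ 0 ∧ ∃ y : S, y ≠ 0 ∧ x * y = 0

/-- The zero-divisor graph Γ(S). -/
def zdGraph (S : Type*) [CommSemigroup S] [Zero S] :
    SimpleGraph {x : S // IsZeroDivisorElem x} where
  Adj a b := a ≠ b ∧ (a : S) * (b : S) = 0
  symm := by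
    constructor
    rintro a b ⟨h1, h2⟩
    exact ⟨h1.symm, by rwa [mul_comm] at h2⟩
  loopless := by constructor; rintro a ⟨h, _⟩; exact h rfl

/-- The graph of Fig.5 with m = n = 1, V = ∅, plus an edge joining x₁ and x₂, on
vertices 0=a, 1=b, 2=c₁, 3=x₁, 4=x₂, 5=y₁, with edges a–b, a–x₁, a–x₂, b–x₁, b–x₂,
x₁–x₂, a–c₁, b–c₁, x₁–y₁, x₂–y₁. -/
def fig5Graph : SimpleGraph (Fin 6) :=
  SimpleGraph.fromEdgeSet
    {s(0,1), s(0,3), s(0,4), s(1,3), s(1,4), s(3,4), s(0,2), s(1,2), s(3,5), s(4,5)}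

/-!
In a commutative semigroup with zero `ann u ⊆ ann (u * w)`, so a nonzero product of two vertices of
the zero-divisor graph is again a vertex, and its neighbourhood contains the neighbourhoods of both
factors. Read off the graph, this gives: `c₁ * y₁` annihilates `a, b, x₁, x₂`, so it is one of them
and `(c₁ * y₁)² = 0`; `c₁ * x₁, c₁ * x₂ ∈ {x₁, x₂}`, which forces `c₁² = c₁`, and symmetrically
`y₁² = y₁`. Hence `(c₁ * y₁)² = c₁² * y₁² = c₁ * y₁ ≠ 0`.
-/

namespace CommSemigroupWithZero

variable {T : CommSemigroupWithZero}

theorem mul_zero' (x : T.carrier) : x * 0 = 0 := by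
  rw [mul_comm]; exact T.zero_mul' x

theorem mul_mul_eq_zero_of_left {x w : T.carrier} (y : T.carrier) (h : x * w = 0) :
    x * y * w = 0 := by
  rw [mul_right_comm, h, T.zero_mul']

theorem mul_mul_eq_zero_of_right {y w : T.carrier} (x : T.carrier) (h : y * w = 0) :
    x * y * w = 0 := by
  rw [mul_assoc, h, mul_zero']

theorem isZeroDivisorElem_mul {x : T.carrier} (hx : IsZeroDivisorElem x) {y : T.carrier}
    (hxy : x * y ≠ 0) : IsZeroDivisorElem (x * y) := by
  obtain ⟨-, w, hw, hxw⟩ := hx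
  exact ⟨hxy, w, hw, mul_mul_eq_zero_of_left y hxw⟩

end CommSemigroupWithZero

open CommSemigroupWithZero

namespace SimpleGraph.Iso

variable {V : Type*} {G : SimpleGraph V} {T : CommSemigroupWithZero} (e : G ≃g zdGraph T.carrier)

theorem mul_eq_zero_of_adj {i j : V} (h : G.Adj i j) : (e i : T.carrier) * e j = 0 :=
  (e.map_adj_iff.mpr h).2

theorem mul_ne_zero_of_not_adj {i j : V} (hij : i ≠ j) (h : ¬ G.Adj i j) :
    (e i : T.carrier) * e j ≠ 0 :=
  fun h0 => h (e.map_adj_iff.mp ⟨e.injective.ne hij, h0⟩)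

theorem eq_or_adj_of_mul_eq_zero {i j : V} (h : (e i : T.carrier) * e j = 0) : i = j ∨ G.Adj i j :=
  or_iff_not_imp_left.mpr fun hij => e.map_adj_iff.mp ⟨e.injective.ne hij, h⟩

theorem exists_apply_eq_of_forall_mul_eq_zero {z : T.carrier} (hz : IsZeroDivisorElem z)
    {s : Finset V} (hs : ∀ j ∈ s, z * e j = 0) :
    ∃ i, (e i : T.carrier) = z ∧ ∀ j ∈ s, i = j ∨ G.Adj i j := by
  obtain ⟨i, hi⟩ := e.surjective ⟨z, hz⟩
  refine ⟨i, congrArg Subtype.val hi, fun j hj => e.eq_or_adj_of_mul_eq_zero ?_⟩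
  rw [hi]; exact hs j hj

end SimpleGraph.Iso

theorem fig5Graph_adj_iff {i j : Fin 6} :
    fig5Graph.Adj i j ↔ i ≠ j ∧ s(i, j) ∈ ({s(0,1), s(0,3), s(0,4), s(1,3), s(1,4), s(3,4),
      s(0,2), s(1,2), s(3,5), s(4,5)} : Finset (Sym2 (Fin 6))) := by
  rw [fig5Graph, SimpleGraph.fromEdgeSet_adj, and_comm]
  simp only [← Finset.mem_coe, Finset.coe_insert, Finset.coe_singleton]

instance : DecidableRel fig5Graph.Adj := fun _ _ => decidable_of_iff _ fig5Graph_adj_iff.symm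

/-- The symmetry `a ↔ x₁, b ↔ x₂, c₁ ↔ y₁`. -/
def fig5GraphSwap : fig5Graph ≃g fig5Graph where
  toEquiv := Equiv.addRight 3
  map_rel_iff' := by decide

section

variable {T : CommSemigroupWithZero} (e : fig5Graph ≃g zdGraph T.carrier)

theorem fig5_c_mul_x {p : Fin 6} (hp : p = 3 ∨ p = 4) :
    ∃ q, (q = 3 ∨ q = 4) ∧ (e 2 : T.carrier) * e p = e q := by
  have hne : (e 2 : T.carrier) * e p ≠ 0 :=
    e.mul_ne_zero_of_not_adj (by omega) (by rcases hp with rfl | rfl <;> decide)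
  obtain ⟨q, hq, hadj⟩ := e.exists_apply_eq_of_forall_mul_eq_zero
    (isZeroDivisorElem_mul (e 2).2 hne) (s := {0, 1, 5}) <| by
      intro j hj
      rcases (by simpa using hj : j = 0 ∨ j = 1 ∨ j = 5) with rfl | rfl | rfl
      · exact mul_mul_eq_zero_of_left _ (e.mul_eq_zero_of_adj (by decide))
      · exact mul_mul_eq_zero_of_left _ (e.mul_eq_zero_of_adj (by decide))
      · exact mul_mul_eq_zero_of_right _
          (e.mul_eq_zero_of_adj (by rcases hp with rfl | rfl <;> decide))
  have only_x : ∀ i : Fin 6, (∀ j ∈ ({0, 1, 5} : Finset (Fin 6)), i = j ∨ fig5Graph.Adj i j) →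
      i = 3 ∨ i = 4 := by decide
  exact ⟨q, only_x q hadj, hq.symm⟩

theorem fig5_c_mul_self : (e 2 : T.carrier) * e 2 = e 2 := by
  have hcp : ∀ p : Fin 6, p = 3 ∨ p = 4 → (e 2 : T.carrier) * e 2 * e p ≠ 0 := by
    intro p hp
    obtain ⟨q, hq, hcq⟩ := fig5_c_mul_x e hp
    rw [mul_assoc, hcq]
    exact e.mul_ne_zero_of_not_adj (by omega) (by rcases hq with rfl | rfl <;> decide)
  have hne : (e 2 : T.carrier) * e 2 ≠ 0 := fun h => hcp 3 (.inl rfl) (by rw [h, T.zero_mul'])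
  obtain ⟨i, hi, hadj⟩ := e.exists_apply_eq_of_forall_mul_eq_zero
    (isZeroDivisorElem_mul (e 2).2 hne) (s := {0}) <| by
      simpa using mul_mul_eq_zero_of_left _ (e.mul_eq_zero_of_adj (by decide : fig5Graph.Adj 2 0))
  have h3 : ¬ fig5Graph.Adj i 3 := fun h => hcp 3 (.inl rfl) (hi ▸ e.mul_eq_zero_of_adj h)
  have h4 : ¬ fig5Graph.Adj i 4 := fun h => hcp 4 (.inr rfl) (hi ▸ e.mul_eq_zero_of_adj h)
  have only_c : ∀ i : Fin 6, (∀ j ∈ ({0} : Finset (Fin 6)), i = j ∨ fig5Graph.Adj i j) →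
      ¬ fig5Graph.Adj i 3 → ¬ fig5Graph.Adj i 4 → i = 2 := by decide
  rw [← hi, only_c i hadj h3 h4]

theorem fig5_y_mul_self : (e 5 : T.carrier) * e 5 = e 5 :=
  fig5_c_mul_self (fig5GraphSwap.trans e)

theorem fig5_c_mul_y_sq : (e 2 : T.carrier) * e 5 * (e 2 * e 5) = 0 := by
  have hne : (e 2 : T.carrier) * e 5 ≠ 0 := e.mul_ne_zero_of_not_adj (by decide) (by decide)
  have hs : ∀ j ∈ ({0, 1, 3, 4} : Finset (Fin 6)), (e 2 : T.carrier) * e 5 * e j = 0 := by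
    intro j hj
    rcases (by simpa using hj : j = 0 ∨ j = 1 ∨ j = 3 ∨ j = 4) with rfl | rfl | rfl | rfl
    · exact mul_mul_eq_zero_of_left _ (e.mul_eq_zero_of_adj (by decide))
    · exact mul_mul_eq_zero_of_left _ (e.mul_eq_zero_of_adj (by decide))
    · exact mul_mul_eq_zero_of_right _ (e.mul_eq_zero_of_adj (by decide))
    · exact mul_mul_eq_zero_of_right _ (e.mul_eq_zero_of_adj (by decide))
  obtain ⟨i, hi, hadj⟩ := e.exists_apply_eq_of_forall_mul_eq_zero
    (isZeroDivisorElem_mul (e 2).2 hne) hs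
  have mem_annihilated : ∀ i : Fin 6, (∀ j ∈ ({0, 1, 3, 4} : Finset (Fin 6)), i = j ∨ fig5Graph.Adj i j) →
      i ∈ ({0, 1, 3, 4} : Finset (Fin 6)) := by decide
  exact hi ▸ hs i (mem_annihilated i hadj)

end

/-- The graph of Fig.5 with m = n = 1, V = ∅ and an extra edge x₁–x₂ is not a
semigroup graph. -/
theorem fig5_plus_edge_not_semigroup_graph :
    ¬ ∃ T : CommSemigroupWithZero, Nonempty (fig5Graph ≃g zdGraph T.carrier) := by
  rintro ⟨T, ⟨e⟩⟩
  apply e.mul_ne_zero_of_not_adj (i := 2) (j := 5) (by decide) (by decide)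
  calc (e 2 : T.carrier) * e 5 = (e 2 * e 2) * (e 5 * e 5) := by
        rw [fig5_c_mul_self e, fig5_y_mul_self e]
    _ = (e 2 * e 5) * (e 2 * e 5) := mul_mul_mul_comm _ _ _ _
    _ = 0 := fig5_c_mul_y_sq e
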